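/- arXiv:math/0204007 — 5 statements merged into one kernel-verified Lean document; each statement's English description precedes it below -/
import Mathlib

section
/- Every simple 4-polytope P has fatness strictly less than 3, i.e., f₁(P) + f₂(P) < 3 · (f₀(P) + f₃(P)). -/
noncomputable section

abbrev E4 := EuclideanSpace ℝ (Fin 4)

/-- A (full-dimensional) convex 4-polytope in ℝ⁴. -/
def IsPolytope4 (P : Set E4) : Prop :=
  ∃ V : Finset E4, affineSpan ℝ (V : Set E4) = ⊤ ∧ P = convexHull ℝ (V : Set E4)

/-- `F` is a nonempty exposed face of `P`. -/
def IsFaceOf (P F : Set E4) : Prop :=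
  F.Nonempty ∧ ∃ c : E4, F = {x ∈ P | ∀ y ∈ P, (inner ℝ c y : ℝ) ≤ inner ℝ c x}

/-- Affine dimension of a set. -/
def faceDim (F : Set E4) : ℕ := Module.finrank ℝ (affineSpan ℝ F).direction

/-- Number of `i`-dimensional faces of `P`. -/
def fVec (P : Set E4) (i : ℕ) : ℕ :=
  Nat.card {F : Set E4 // IsFaceOf P F ∧ faceDim F = i}

/-- `P` is simple: every vertex is contained in exactly 4 edges. -/
def SimplePolytope (P : Set E4) : Prop :=
  ∀ v : Set E4, IsFaceOf P v → faceDim v = 0 →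
    Nat.card {e : Set E4 // IsFaceOf P e ∧ faceDim e = 1 ∧ v ⊆ e} = 4

/-!
Fix `c` whose inner product separates the points of `V`; then every face of `P = conv V` has a
unique highest vertex. At a vertex `v` of a simple 4-polytope the four edge directions (the extreme
points of the vertex figure, which generate the cone of `P` at `v` by Krein–Milman) form a basis,
so the faces through `v` correspond to the sets of edges at `v`, and the faces with highest vertex
`v` to the sets of edges descending from `v`. With `d(v)` descending edges this gives
`f_k = ∑_v C(d(v), k)`, and `C(d, 1) + C(d, 2) ≤ 3 (C(d, 0) + C(d, 3))` for `d ≤ 4`, strictly at the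
top vertex, where `d = 4`.
-/

open Finset Filter Module Topology RealInnerProductSpace
open scoped Classical

section Argmax

variable {E : Type*} [NormedAddCommGroup E] [InnerProductSpace ℝ E]

def argmaxSet (V : Finset E) (c : E) : Finset E :=
  {w ∈ V | ∀ u ∈ V, ⟪c, u⟫ ≤ ⟪c, w⟫}

variable {V : Finset E} {c w : E}

theorem mem_argmaxSet : w ∈ argmaxSet V c ↔ w ∈ V ∧ ∀ u ∈ V, ⟪c, u⟫ ≤ ⟪c, w⟫ :=
  mem_filter

theorem argmaxSet_subset (V : Finset E) (c : E) : argmaxSet V c ⊆ V := filter_subset _ _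

theorem argmaxSet_nonempty (hV : V.Nonempty) (c : E) : (argmaxSet V c).Nonempty := by
  obtain ⟨w, hw, hmax⟩ := V.exists_max_image (fun u => ⟪c, u⟫) hV
  exact ⟨w, mem_argmaxSet.2 ⟨hw, hmax⟩⟩

theorem mem_argmaxSet_iff_inner_eq {w₀ : E} (hw₀ : w₀ ∈ argmaxSet V c) :
    w ∈ argmaxSet V c ↔ w ∈ V ∧ ⟪c, w⟫ = ⟪c, w₀⟫ := by
  have hmax := (mem_argmaxSet.1 hw₀).2
  rw [mem_argmaxSet]
  refine ⟨fun ⟨hw, h⟩ => ⟨hw, (hmax w hw).antisymm (h w₀ (mem_argmaxSet.1 hw₀).1)⟩,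
    fun ⟨hw, h⟩ => ⟨hw, fun u hu => h ▸ hmax u hu⟩⟩

theorem inner_le_of_mem_argmaxSet (hw : w ∈ argmaxSet V c) {y : E}
    (hy : y ∈ convexHull ℝ (V : Set E)) : ⟪c, y⟫ ≤ ⟪c, w⟫ :=
  convexHull_min (mem_argmaxSet.1 hw).2
    (convex_halfSpace_le (innerₛₗ ℝ c).isLinear _) hy

theorem inner_eq_of_mem_convexHull_argmaxSet (hw : w ∈ argmaxSet V c) {x : E}
    (hx : x ∈ convexHull ℝ (argmaxSet V c : Set E)) : ⟪c, x⟫ = ⟪c, w⟫ :=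
  convexHull_min (fun _ hu => ((mem_argmaxSet_iff_inner_eq hw).1 hu).2)
    (convex_hyperplane (innerₛₗ ℝ c).isLinear _) hx

theorem exposed_convexHull_eq (hV : V.Nonempty) (c : E) :
    {x ∈ convexHull ℝ (V : Set E) | ∀ y ∈ convexHull ℝ (V : Set E), ⟪c, y⟫ ≤ ⟪c, x⟫} =
      convexHull ℝ (argmaxSet V c : Set E) := by
  obtain ⟨w, hw⟩ := argmaxSet_nonempty hV c
  have hVc : (argmaxSet V c : Set E) ⊆ V := by exact_mod_cast argmaxSet_subset V c
  ext x
  constructor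
  · rintro ⟨hxV, hxmax⟩
    have hxw : ⟪c, w⟫ ≤ ⟪c, x⟫ := hxmax w (subset_convexHull ℝ _ (hVc hw))
    obtain ⟨μ, hμ0, hμ1, rfl⟩ := Finset.mem_convexHull.1 hxV
    -- the weights `μ u * (⟪c, w⟫ - ⟪c, u⟫)` are nonnegative and sum to `⟪c, w⟫ - ⟪c, x⟫ ≤ 0`
    have hgap : ∀ u ∈ V, 0 ≤ μ u * (⟪c, w⟫ - ⟪c, u⟫) := fun u hu =>
      mul_nonneg (hμ0 u hu) (sub_nonneg.2 ((mem_argmaxSet.1 hw).2 u hu))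
    have hsum : ∑ u ∈ V, μ u * (⟪c, w⟫ - ⟪c, u⟫) = ⟪c, w⟫ - ⟪c, V.centerMass μ id⟫ := by
      simp only [Finset.centerMass, hμ1, inv_one, one_smul, inner_sum, real_inner_smul_right,
        mul_sub, Finset.sum_sub_distrib, ← Finset.sum_mul, id, one_mul]
    have hzero := (Finset.sum_eq_zero_iff_of_nonneg hgap).1
      (le_antisymm (hsum ▸ sub_nonpos.2 hxw) (Finset.sum_nonneg hgap))
    have hsupp : ∀ u ∈ V, u ∉ argmaxSet V c → μ u = 0 := by
      intro u hu hunot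
      have hlt : ⟪c, u⟫ < ⟪c, w⟫ := lt_of_le_of_ne ((mem_argmaxSet.1 hw).2 u hu)
        fun h => hunot ((mem_argmaxSet_iff_inner_eq hw).2 ⟨hu, h⟩)
      exact (mul_eq_zero.1 (hzero u hu)).resolve_right (sub_ne_zero.2 hlt.ne')
    rw [← Finset.centerMass_subset id (argmaxSet_subset V c) hsupp]
    refine Finset.centerMass_mem_convexHull _ (fun u hu => hμ0 u (argmaxSet_subset V c hu)) ?_
      (fun u hu => hu)
    rw [Finset.sum_subset (argmaxSet_subset V c) hsupp, hμ1]
    exact one_pos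
  · intro hx
    refine ⟨convexHull_mono hVc hx, fun y hy => ?_⟩
    rw [inner_eq_of_mem_convexHull_argmaxSet hw hx]
    exact inner_le_of_mem_argmaxSet hw hy

theorem convexHull_argmaxSet_inter (c : E) :
    convexHull ℝ (argmaxSet V c : Set E) ∩ V = argmaxSet V c := by
  refine Set.Subset.antisymm (fun u ⟨hu, huV⟩ => ?_) fun u hu =>
    ⟨subset_convexHull ℝ _ hu, argmaxSet_subset V c hu⟩
  obtain ⟨w, hw⟩ : (argmaxSet V c).Nonempty := argmaxSet_nonempty ⟨u, huV⟩ c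
  exact (mem_argmaxSet_iff_inner_eq hw).2 ⟨huV, inner_eq_of_mem_convexHull_argmaxSet hw hu⟩

theorem argmaxSet_eq_of_inner_sub_nonpos {v : E} (hv : v ∈ V) (hc : ∀ w ∈ V, ⟪c, w - v⟫ ≤ 0) :
    argmaxSet V c = {w ∈ V | ⟪c, w - v⟫ = 0} := by
  have hvmax : v ∈ argmaxSet V c :=
    mem_argmaxSet.2 ⟨hv, fun u hu => by linarith [inner_sub_right (𝕜 := ℝ) c u v ▸ hc u hu]⟩
  ext w
  rw [mem_argmaxSet_iff_inner_eq hvmax, mem_filter, inner_sub_right, sub_eq_zero]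

theorem inner_lt_of_mem_argmaxSet_of_injOn (hc : Set.InjOn (fun w => ⟪c, w⟫) V) {v : E}
    (hv : v ∈ argmaxSet V c) (hw : w ∈ V) (hwv : w ≠ v) : ⟪c, w⟫ < ⟪c, v⟫ :=
  lt_of_le_of_ne ((mem_argmaxSet.1 hv).2 w hw) fun h =>
    hwv (hc hw (argmaxSet_subset V c hv) h)

theorem argmaxSet_eq_singleton_of_injOn (hc : Set.InjOn (fun w => ⟪c, w⟫) V) {v : E}
    (hv : v ∈ argmaxSet V c) : argmaxSet V c = {v} :=
  eq_singleton_iff_unique_mem.2 ⟨hv, fun _ hu => hc (argmaxSet_subset V c hu)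
    (argmaxSet_subset V c hv) ((mem_argmaxSet_iff_inner_eq hv).1 hu).2⟩

/-- The witness is `c' = c + ε • d` for small `ε > 0`. -/
theorem exists_argmaxSet_eq_argmaxSet_argmaxSet (c d : E) :
    ∃ c', argmaxSet V c' = argmaxSet (argmaxSet V c) d := by
  set A := argmaxSet V c
  have hgap : ∀ z ∈ V, z ∉ A → ∀ w ∈ A, ⟪c, z⟫ < ⟪c, w⟫ := fun z hz hzA w hw =>
    lt_of_le_of_ne ((mem_argmaxSet.1 hw).2 z hz) fun h =>
      hzA ((mem_argmaxSet_iff_inner_eq hw).2 ⟨hz, h⟩)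
  have hsmall : ∀ᶠ ε in 𝓝 (0 : ℝ), ∀ z ∈ V, ∀ w ∈ V, ⟪c, z⟫ < ⟪c, w⟫ →
      ⟪c, z⟫ + ε * ⟪d, z⟫ < ⟪c, w⟫ + ε * ⟪d, w⟫ := by
    refine (eventually_all_finset V).2 fun z _ => (eventually_all_finset V).2 fun w _ => ?_
    by_cases h : ⟪c, z⟫ < ⟪c, w⟫
    · have hcont : Continuous fun ε : ℝ => ⟪c, z⟫ + ε * ⟪d, z⟫ - (⟪c, w⟫ + ε * ⟪d, w⟫) := by
        fun_prop
      filter_upwards [hcont.tendsto 0 |>.eventually (eventually_lt_nhds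
        (show ⟪c, z⟫ + 0 * ⟪d, z⟫ - (⟪c, w⟫ + 0 * ⟪d, w⟫) < 0 by linarith))]
        with ε hε _ using by linarith
    · exact Eventually.of_forall fun _ h' => absurd h' h
  obtain ⟨ε, hε, hεpos⟩ := ((hsmall.filter_mono nhdsWithin_le_nhds).and
    (self_mem_nhdsWithin : Set.Ioi (0 : ℝ) ∈ 𝓝[>] 0)).exists
  have hpert : ∀ u, ⟪c + ε • d, u⟫ = ⟪c, u⟫ + ε * ⟪d, u⟫ := fun u => by
    rw [inner_add_left, real_inner_smul_left]
  refine ⟨c + ε • d, Finset.ext fun w => ⟨fun hw => ?_, fun hw => ?_⟩⟩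
  · obtain ⟨hwV, hwmax⟩ := mem_argmaxSet.1 hw
    obtain ⟨w₀, hw₀⟩ := argmaxSet_nonempty (argmaxSet_nonempty ⟨w, hwV⟩ c) d
    have hw₀A := argmaxSet_subset A d hw₀
    have hwA : w ∈ A := by
      by_contra hwA
      have := hε w hwV w₀ (argmaxSet_subset V c hw₀A) (hgap w hwV hwA w₀ hw₀A)
      linarith [hwmax w₀ (argmaxSet_subset V c hw₀A), hpert w, hpert w₀]
    refine mem_argmaxSet.2 ⟨hwA, fun z hz => ?_⟩
    have hcz := ((mem_argmaxSet_iff_inner_eq hwA).1 hz).2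
    have := hwmax z (argmaxSet_subset V c hz)
    rw [hpert, hpert, hcz] at this
    exact le_of_mul_le_mul_left (by linarith) hεpos
  · obtain ⟨hwA, hwmax⟩ := mem_argmaxSet.1 hw
    refine mem_argmaxSet.2 ⟨argmaxSet_subset V c hwA, fun z hz => ?_⟩
    rw [hpert, hpert]
    by_cases hzA : z ∈ A
    · rw [((mem_argmaxSet_iff_inner_eq hwA).1 hzA).2]
      nlinarith [hwmax z hzA]
    · exact (hε z hz w (argmaxSet_subset V c hwA) (hgap z hz hzA w hwA)).le

theorem mem_extremePoints_of_argmaxSet_eq_singleton {p : E} (hp : argmaxSet V c = {p}) :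
    p ∈ (convexHull ℝ (V : Set E)).extremePoints ℝ := by
  have hV : V.Nonempty := ⟨p, argmaxSet_subset V c (hp ▸ mem_singleton_self p)⟩
  have hface := exposed_convexHull_eq hV c
  rw [hp, coe_singleton, convexHull_singleton] at hface
  obtain ⟨hpV, hpmax⟩ : p ∈ {x ∈ convexHull ℝ (V : Set E) |
      ∀ y ∈ convexHull ℝ (V : Set E), ⟪c, y⟫ ≤ ⟪c, x⟫} := hface ▸ rfl
  have hexposed : p ∈ (convexHull ℝ (V : Set E)).exposedPoints ℝ := by
    refine ⟨hpV, innerSL ℝ c, fun y hy => ⟨hpmax y hy, fun hle => ?_⟩⟩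
    exact (hface ▸ ⟨hy, fun z hz => (hpmax z hz).trans hle⟩ : y ∈ ({p} : Set E))
  exact exposedPoints_subset_extremePoints hexposed

theorem exists_argmaxSet_eq_singleton_of_mem_extremePoints [FiniteDimensional ℝ E] {p : E}
    (hpV : p ∈ V) (hp : p ∈ (convexHull ℝ (V : Set E)).extremePoints ℝ) :
    ∃ c, argmaxSet V c = {p} := by
  have herase : ((V.erase p : Finset E) : Set E) ⊆ convexHull ℝ (V : Set E) \ {p} :=
    fun _ hx => ⟨subset_convexHull ℝ _ (mem_of_mem_erase hx), ne_of_mem_erase hx⟩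
  have hpnot : p ∉ convexHull ℝ ((V.erase p : Finset E) : Set E) := fun hmem =>
    ((convex_convexHull ℝ _).mem_extremePoints_iff_mem_sdiff_convexHull_sdiff.1 hp).2
      (convexHull_mono herase hmem)
  obtain ⟨f, u, hfu, hup⟩ := geometric_hahn_banach_closed_point (convex_convexHull ℝ _)
    ((V.erase p).finite_toSet.isClosed_convexHull ℝ) hpnot
  have hlt : ∀ q ∈ V, q ≠ p → f q < f p := fun q hq hqp =>
    (hfu q (subset_convexHull ℝ _ (mem_erase.2 ⟨hqp, hq⟩))).trans hup
  refine ⟨(InnerProductSpace.toDual ℝ E).symm f, eq_singleton_iff_unique_mem.2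
    ⟨mem_argmaxSet.2 ⟨hpV, fun q hq => ?_⟩, fun q hq => by_contra fun hqp => ?_⟩⟩
  · simp only [InnerProductSpace.toDual_symm_apply]
    rcases eq_or_ne q p with rfl | hqp
    · rfl
    · exact (hlt q hq hqp).le
  · have := (mem_argmaxSet.1 hq).2 p hpV
    simp only [InnerProductSpace.toDual_symm_apply] at this
    exact (hlt q (argmaxSet_subset V _ hq) hqp).not_ge this

theorem exists_injOn_inner (V : Finset E) : ∃ c : E, Set.InjOn (fun w => ⟪c, w⟫) V := by
  let H : {q // q ∈ {q ∈ V ×ˢ V | q.1 ≠ q.2}} → Submodule ℝ E := fun q =>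
    LinearMap.ker (innerₛₗ ℝ (q.1.1 - q.1.2))
  have hH : ⋃ q, (H q : Set E) ≠ Set.univ := fun hcover => by
    obtain ⟨⟨q, hq⟩, htop⟩ := Subspace.exists_eq_top_of_iUnion_eq_univ hcover
    have : q.1 - q.2 ∈ H ⟨q, hq⟩ := htop ▸ Submodule.mem_top
    exact (mem_filter.1 hq).2 (sub_eq_zero.1 (inner_self_eq_zero.1 this))
  obtain ⟨c, hc⟩ := (Set.ne_univ_iff_exists_notMem _).1 hH
  refine ⟨c, fun w hw w' hw' h => by_contra fun hne => hc (Set.mem_iUnion.2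
    ⟨⟨(w, w'), mem_filter.2 ⟨mem_product.2 ⟨hw, hw'⟩, hne⟩⟩, ?_⟩)⟩
  change ⟪w - w', c⟫ = 0
  rw [inner_sub_left, real_inner_comm, real_inner_comm c w']
  exact sub_eq_zero.2 h

theorem mem_of_argmaxSet_eq_singleton {v : E} (hv : argmaxSet V c = {v}) : v ∈ V :=
  argmaxSet_subset V c (hv ▸ mem_singleton_self v)

def vertexSet (V : Finset E) : Finset E := {v ∈ V | ∃ c, argmaxSet V c = {v}}

theorem mem_vertexSet {v : E} : v ∈ vertexSet V ↔ ∃ c, argmaxSet V c = {v} :=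
  mem_filter.trans (and_iff_right_of_imp fun ⟨_, hc⟩ => mem_of_argmaxSet_eq_singleton hc)

theorem exists_mem_vertexSet_forall_inner_lt (hV : V.Nonempty)
    (hc : Set.InjOn (fun w => ⟪c, w⟫) V) (c' : E) :
    ∃ v ∈ argmaxSet V c', v ∈ vertexSet V ∧ ∀ w ∈ argmaxSet V c', w ≠ v → ⟪c, w⟫ < ⟪c, v⟫ := by
  have hcA := hc.mono (coe_subset.2 (argmaxSet_subset V c'))
  obtain ⟨v, hv⟩ := argmaxSet_nonempty (argmaxSet_nonempty hV c') c
  obtain ⟨c'', hc''⟩ := exists_argmaxSet_eq_argmaxSet_argmaxSet (V := V) c' c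
  have hvA := argmaxSet_subset _ c hv
  exact ⟨v, hvA, mem_vertexSet.2 ⟨c'', hc''.trans (argmaxSet_eq_singleton_of_injOn hcA hv)⟩,
    fun w hw hwv => inner_lt_of_mem_argmaxSet_of_injOn hcA hv hw hwv⟩

end Argmax

section VertexFigure

variable {E : Type*} [NormedAddCommGroup E] [InnerProductSpace ℝ E] {V : Finset E} {c₀ v w p : E}

/-- `w - v` rescaled onto the hyperplane `⟪c₀, ·⟫ = -1`. When `c₀` exposes the vertex `v` of
`conv V`, these points span the vertex figure at `v`, whose extreme points are the directions of
the edges at `v`. -/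
def vertexDir (c₀ v w : E) : E := ⟪c₀, v - w⟫⁻¹ • (w - v)

def vertexFigure (V : Finset E) (c₀ v : E) : Finset E := (V.erase v).image (vertexDir c₀ v)

def edgeDirs (V : Finset E) (c₀ v : E) : Finset E :=
  {p ∈ vertexFigure V c₀ v | p ∈ (convexHull ℝ (vertexFigure V c₀ v : Set E)).extremePoints ℝ}

def rayPoints (V : Finset E) (v p : E) : Finset E := {w ∈ V | ∃ t : ℝ, 0 ≤ t ∧ w - v = t • p}

theorem inner_sub_pos_of_argmaxSet_eq_singleton (hv : argmaxSet V c₀ = {v}) (hw : w ∈ V)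
    (hwv : w ≠ v) : 0 < ⟪c₀, v - w⟫ := by
  have hvmax : v ∈ argmaxSet V c₀ := hv ▸ mem_singleton_self v
  have hlt : ⟪c₀, w⟫ < ⟪c₀, v⟫ := lt_of_le_of_ne ((mem_argmaxSet.1 hvmax).2 w hw) fun h =>
    hwv (mem_singleton.1 (hv ▸ (mem_argmaxSet_iff_inner_eq hvmax).2 ⟨hw, h⟩))
  rw [inner_sub_right]
  linarith

theorem sub_eq_smul_vertexDir (h : ⟪c₀, v - w⟫ ≠ 0) : w - v = ⟪c₀, v - w⟫ • vertexDir c₀ v w := by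
  rw [vertexDir, smul_inv_smul₀ h]

theorem inner_vertexDir (h : ⟪c₀, v - w⟫ ≠ 0) : ⟪c₀, vertexDir c₀ v w⟫ = -1 := by
  rw [vertexDir, real_inner_smul_right, ← neg_sub v w, inner_neg_right, mul_neg, inv_mul_cancel₀ h]

theorem mem_vertexFigure : p ∈ vertexFigure V c₀ v ↔ ∃ w ∈ V, w ≠ v ∧ vertexDir c₀ v w = p := by
  simp only [vertexFigure, mem_image, mem_erase]
  exact ⟨fun ⟨w, ⟨hwv, hw⟩, h⟩ => ⟨w, hw, hwv, h⟩, fun ⟨w, hw, hwv, h⟩ => ⟨w, ⟨hwv, hw⟩, h⟩⟩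

theorem inner_of_mem_vertexFigure (hv : argmaxSet V c₀ = {v}) (hp : p ∈ vertexFigure V c₀ v) :
    ⟪c₀, p⟫ = -1 := by
  obtain ⟨w, hw, hwv, rfl⟩ := mem_vertexFigure.1 hp
  exact inner_vertexDir (inner_sub_pos_of_argmaxSet_eq_singleton hv hw hwv).ne'

theorem self_mem_rayPoints (hv : v ∈ V) (p : E) : v ∈ rayPoints V v p :=
  mem_filter.2 ⟨hv, 0, le_rfl, by rw [sub_self, zero_smul]⟩

theorem mem_rayPoints_iff (hv : argmaxSet V c₀ = {v}) (hp : p ∈ vertexFigure V c₀ v)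
    (hwv : w ≠ v) : w ∈ rayPoints V v p ↔ w ∈ V ∧ vertexDir c₀ v w = p := by
  have hpc := inner_of_mem_vertexFigure hv hp
  simp only [rayPoints, mem_filter, and_congr_right_iff]
  refine fun hw => ⟨fun ⟨t, _, hwt⟩ => ?_, fun h => ?_⟩
  · have hct : ⟪c₀, v - w⟫ = t := by
      rw [← neg_sub w v, inner_neg_right, hwt, real_inner_smul_right, hpc]
      ring
    have ht : t ≠ 0 := fun ht => hwv (sub_eq_zero.1 (by rw [hwt, ht, zero_smul]))
    rw [vertexDir, hct, hwt, inv_smul_smul₀ ht]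
  · have hpos := inner_sub_pos_of_argmaxSet_eq_singleton hv hw hwv
    exact ⟨_, hpos.le, h ▸ sub_eq_smul_vertexDir hpos.ne'⟩

theorem vertexDir_mem_vertexFigure (hw : w ∈ V) (hwv : w ≠ v) :
    vertexDir c₀ v w ∈ vertexFigure V c₀ v :=
  mem_vertexFigure.2 ⟨w, hw, hwv, rfl⟩

theorem mem_rayPoints_vertexDir (hv : argmaxSet V c₀ = {v}) (hw : w ∈ V) (hwv : w ≠ v) :
    w ∈ rayPoints V v (vertexDir c₀ v w) :=
  (mem_rayPoints_iff hv (vertexDir_mem_vertexFigure hw hwv) hwv).2 ⟨hw, rfl⟩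

theorem convexHull_edgeDirs :
    convexHull ℝ (edgeDirs V c₀ v : Set E) = convexHull ℝ (vertexFigure V c₀ v : Set E) := by
  have hfin := (vertexFigure V c₀ v).finite_toSet
  have hext : (edgeDirs V c₀ v : Set E) =
      (convexHull ℝ (vertexFigure V c₀ v : Set E)).extremePoints ℝ := by
    ext p
    simp only [edgeDirs, coe_filter]
    exact ⟨fun h => h.2, fun h => ⟨extremePoints_convexHull_subset h, h⟩⟩
  rw [hext]
  nth_rewrite 2 [← closure_convexHull_extremePoints (hfin.isCompact_convexHull ℝ)
    (convex_convexHull ℝ _)]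
  exact ((hfin.subset extremePoints_convexHull_subset).isClosed_convexHull ℝ).closure_eq.symm

theorem vertexDir_eq_of_sub_eq_smul {w' : E} {t : ℝ} (ht : t ≠ 0) (h : w - v = t • (w' - v)) :
    vertexDir c₀ v w = vertexDir c₀ v w' := by
  have h' : v - w = t • (v - w') := by rw [← neg_sub w v, h, ← smul_neg, neg_sub]
  rw [vertexDir, vertexDir, h, h', real_inner_smul_right, mul_inv, mul_smul, smul_comm t⁻¹ _,
    inv_smul_smul₀ ht]

theorem exists_argmaxSet_eq_rayPoints [FiniteDimensional ℝ E]
    (hv : argmaxSet V c₀ = {v}) (hp : p ∈ edgeDirs V c₀ v) :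
    ∃ c, argmaxSet V c = rayPoints V v p := by
  obtain ⟨hpF, hpext⟩ := mem_filter.1 hp
  obtain ⟨c₁, hc₁⟩ := exists_argmaxSet_eq_singleton_of_mem_extremePoints hpF hpext
  have hpmax : p ∈ argmaxSet (vertexFigure V c₀ v) c₁ := hc₁ ▸ mem_singleton_self p
  -- `c` vanishes on `p` and is negative on the rest of the vertex figure
  set c := c₁ + ⟪c₁, p⟫ • c₀
  have hc : ∀ w ∈ V, w ≠ v →
      ⟪c, w - v⟫ = ⟪c₀, v - w⟫ * (⟪c₁, vertexDir c₀ v w⟫ - ⟪c₁, p⟫) := fun w hw hwv => by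
    have hne := (inner_sub_pos_of_argmaxSet_eq_singleton hv hw hwv).ne'
    rw [sub_eq_smul_vertexDir hne, inner_add_left, real_inner_smul_left, real_inner_smul_right,
      real_inner_smul_right, inner_vertexDir hne]
    ring
  have hvV := mem_of_argmaxSet_eq_singleton hv
  refine ⟨c, ?_⟩
  rw [argmaxSet_eq_of_inner_sub_nonpos hvV fun w hw => ?_]
  · ext w
    rcases eq_or_ne w v with rfl | hwv
    · simp [hvV, self_mem_rayPoints hvV]
    · rw [mem_filter, mem_rayPoints_iff hv hpF hwv, and_congr_right_iff]
      intro hw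
      rw [hc w hw hwv, mul_eq_zero, sub_eq_zero,
        or_iff_right (inner_sub_pos_of_argmaxSet_eq_singleton hv hw hwv).ne',
        ← and_iff_right (b := ⟪c₁, vertexDir c₀ v w⟫ = ⟪c₁, p⟫) (vertexDir_mem_vertexFigure hw hwv),
        ← mem_argmaxSet_iff_inner_eq hpmax, hc₁, mem_singleton]
  · rcases eq_or_ne w v with rfl | hwv
    · simp
    rw [hc w hw hwv]
    exact mul_nonpos_of_nonneg_of_nonpos (inner_sub_pos_of_argmaxSet_eq_singleton hv hw hwv).le
      (sub_nonpos.2 ((mem_argmaxSet.1 hpmax).2 _ (vertexDir_mem_vertexFigure hw hwv)))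

theorem mem_edgeDirs_of_argmaxSet_eq_rayPoints {c : E} (hv : argmaxSet V c₀ = {v})
    (hp : p ∈ vertexFigure V c₀ v) (hc : argmaxSet V c = rayPoints V v p) :
    p ∈ edgeDirs V c₀ v := by
  have hvc : v ∈ argmaxSet V c := hc ▸ self_mem_rayPoints (mem_of_argmaxSet_eq_singleton hv) p
  have hmem : ∀ w ∈ V, w ≠ v → (⟪c, w - v⟫ = 0 ↔ vertexDir c₀ v w = p) := fun w hw hwv => by
    rw [inner_sub_right, sub_eq_zero, ← (mem_argmaxSet_iff_inner_eq hvc).trans (and_iff_right hw),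
      hc, mem_rayPoints_iff hv hp hwv, and_iff_right hw]
  -- on the vertex figure, `c` is nonpositive and vanishes exactly at `p`
  have hq : ∀ w ∈ V, w ≠ v → ⟪c, vertexDir c₀ v w⟫ = ⟪c₀, v - w⟫⁻¹ * ⟪c, w - v⟫ :=
    fun _ _ _ => real_inner_smul_right _ _ _
  have hnonpos : ∀ w ∈ V, w ≠ v → ⟪c, vertexDir c₀ v w⟫ ≤ 0 := fun w hw hwv => by
    rw [hq w hw hwv]
    refine mul_nonpos_of_nonneg_of_nonpos
      (inv_nonneg.2 (inner_sub_pos_of_argmaxSet_eq_singleton hv hw hwv).le) ?_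
    rw [inner_sub_right, sub_nonpos]
    exact (mem_argmaxSet.1 hvc).2 w hw
  obtain ⟨w₀, hw₀, hw₀v, rfl⟩ := mem_vertexFigure.1 hp
  have hp0 : ⟪c, vertexDir c₀ v w₀⟫ = 0 := by
    rw [hq w₀ hw₀ hw₀v, (hmem w₀ hw₀ hw₀v).2 rfl, mul_zero]
  refine mem_filter.2 ⟨hp, mem_extremePoints_of_argmaxSet_eq_singleton (c := c)
    (eq_singleton_iff_unique_mem.2 ⟨mem_argmaxSet.2 ⟨hp, fun q hq' => ?_⟩, fun q hq' => ?_⟩)⟩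
  · obtain ⟨w, hw, hwv, rfl⟩ := mem_vertexFigure.1 hq'
    exact hp0 ▸ hnonpos w hw hwv
  · obtain ⟨hqF, hqmax⟩ := mem_argmaxSet.1 hq'
    obtain ⟨w, hw, hwv, rfl⟩ := mem_vertexFigure.1 hqF
    have h0 := le_antisymm (hnonpos w hw hwv) (hp0 ▸ hqmax _ hp)
    rw [hq w hw hwv, mul_eq_zero,
      or_iff_right (inv_ne_zero (inner_sub_pos_of_argmaxSet_eq_singleton hv hw hwv).ne')] at h0
    exact (hmem w hw hwv).1 h0

theorem exists_argmaxSet_eq_rayPoints_of_finrank_eq_one [FiniteDimensional ℝ E] {c : E}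
    (hv : argmaxSet V c₀ = {v}) (hvc : v ∈ argmaxSet V c)
    (hdim : finrank ℝ (vectorSpan ℝ (argmaxSet V c : Set E)) = 1) :
    ∃ p ∈ vertexFigure V c₀ v, argmaxSet V c = rayPoints V v p := by
  obtain ⟨w₀, hw₀c, hw₀v⟩ : ∃ w₀ ∈ argmaxSet V c, w₀ ≠ v := by
    by_contra! h
    rw [eq_singleton_iff_unique_mem.2 ⟨hvc, h⟩, coe_singleton, vectorSpan_singleton,
      finrank_bot] at hdim
    exact zero_ne_one hdim
  have hw₀ := argmaxSet_subset V c hw₀c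
  have hspan : vectorSpan ℝ (argmaxSet V c : Set E) = ℝ ∙ (w₀ - v) :=
    (Submodule.eq_of_le_of_finrank_le (Submodule.span_singleton_le_iff_mem _ _ |>.2
      (vsub_mem_vectorSpan ℝ hw₀c hvc)) (by
      rw [hdim, vsub_eq_sub, finrank_span_singleton (sub_ne_zero.2 hw₀v)])).symm
  have hp := vertexDir_mem_vertexFigure (c₀ := c₀) hw₀ hw₀v
  refine ⟨_, hp, Finset.ext fun w => ?_⟩
  rcases eq_or_ne w v with rfl | hwv
  · simp [hvc, self_mem_rayPoints (mem_of_argmaxSet_eq_singleton hv)]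
  rw [mem_rayPoints_iff hv hp hwv]
  constructor
  · intro hw
    obtain ⟨t, ht⟩ := Submodule.mem_span_singleton.1 (hspan ▸ vsub_mem_vectorSpan ℝ hw hvc)
    refine ⟨argmaxSet_subset V c hw, vertexDir_eq_of_sub_eq_smul (fun ht0 => hwv ?_) ht.symm⟩
    rw [ht0, zero_smul, vsub_eq_sub, eq_comm, sub_eq_zero] at ht
    exact ht
  · rintro ⟨hw, hdir⟩
    have h₀ : ⟪c, w₀ - v⟫ = 0 := by
      rw [inner_sub_right, ((mem_argmaxSet_iff_inner_eq hvc).1 hw₀c).2, sub_self]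
    refine (mem_argmaxSet_iff_inner_eq hvc).2 ⟨hw, ?_⟩
    rw [← sub_eq_zero, ← inner_sub_right,
      sub_eq_smul_vertexDir (inner_sub_pos_of_argmaxSet_eq_singleton hv hw hwv).ne', hdir,
      vertexDir, real_inner_smul_right, real_inner_smul_right, h₀, mul_zero, mul_zero]

theorem finrank_vectorSpan_rayPoints (hv : argmaxSet V c₀ = {v})
    (hp : p ∈ vertexFigure V c₀ v) :
    finrank ℝ (vectorSpan ℝ (rayPoints V v p : Set E)) = 1 := by
  suffices vectorSpan ℝ (rayPoints V v p : Set E) = ℝ ∙ p by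
    rw [this, finrank_span_singleton]
    rintro rfl
    simpa using inner_of_mem_vertexFigure hv hp
  rw [vectorSpan_eq_span_vsub_set_right ℝ
    (mem_coe.2 (self_mem_rayPoints (mem_of_argmaxSet_eq_singleton hv) p))]
  refine le_antisymm (Submodule.span_le.2 ?_) (Submodule.span_singleton_le_iff_mem _ _ |>.2 ?_)
  · rintro _ ⟨w, hw, rfl⟩
    obtain ⟨-, t, -, ht⟩ := mem_filter.1 hw
    exact Submodule.mem_span_singleton.2 ⟨t, ht.symm⟩
  · obtain ⟨w, hw, hwv, rfl⟩ := mem_vertexFigure.1 hp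
    exact Submodule.smul_mem _ _
      (Submodule.subset_span ⟨w, mem_rayPoints_vertexDir hv hw hwv, rfl⟩)

theorem eq_of_rayPoints_eq {p' : E} (hv : argmaxSet V c₀ = {v})
    (hp : p ∈ vertexFigure V c₀ v) (hp' : p' ∈ vertexFigure V c₀ v)
    (h : rayPoints V v p = rayPoints V v p') : p = p' := by
  obtain ⟨w, hw, hwv, rfl⟩ := mem_vertexFigure.1 hp
  exact ((mem_rayPoints_iff hv hp' hwv).1 (h ▸ mem_rayPoints_vertexDir hv hw hwv)).2

theorem exists_nonneg_sum_edgeDirs (hv : argmaxSet V c₀ = {v}) (hw : w ∈ V) :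
    ∃ μ : E → ℝ, (∀ p ∈ edgeDirs V c₀ v, 0 ≤ μ p) ∧ w - v = ∑ p ∈ edgeDirs V c₀ v, μ p • p := by
  rcases eq_or_ne w v with rfl | hwv
  · exact ⟨0, fun _ _ => le_rfl, by simp⟩
  have hpos := inner_sub_pos_of_argmaxSet_eq_singleton hv hw hwv
  have hmem : vertexDir c₀ v w ∈ convexHull ℝ (edgeDirs V c₀ v : Set E) :=
    (convexHull_edgeDirs (V := V)).symm ▸
      subset_convexHull ℝ _ (vertexDir_mem_vertexFigure hw hwv)
  obtain ⟨μ, hμ0, hμ1, hμ⟩ := Finset.mem_convexHull.1 hmem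
  refine ⟨fun p => ⟪c₀, v - w⟫ * μ p, fun p hp => mul_nonneg hpos.le (hμ0 p hp), ?_⟩
  rw [sub_eq_smul_vertexDir hpos.ne', ← hμ, Finset.centerMass, hμ1, inv_one, one_smul, smul_sum]
  simp only [id, mul_smul]

end VertexFigure

section VertexCone

variable {E ι : Type*} [NormedAddCommGroup E] [InnerProductSpace ℝ E]

/-- The local picture at a simple vertex `v`: the edge directions at `v` form a basis `b` that
generates the cone of `V` at `v`. -/
structure IsVertexConeBasis (V : Finset E) (v : E) (b : Basis ι ℝ E) : Prop where
  mem : v ∈ V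
  repr_nonneg : ∀ w ∈ V, ∀ i, 0 ≤ b.repr (w - v) i
  exists_sub_eq_smul : ∀ i, ∃ w ∈ V, ∃ s : ℝ, 0 < s ∧ w - v = s • b i

def coordFace (V : Finset E) (v : E) (b : Basis ι ℝ E) (T : Finset ι) : Finset E :=
  {w ∈ V | ∀ i ∉ T, b.repr (w - v) i = 0}

def downSet [Fintype ι] (c : E) (b : Basis ι ℝ E) : Finset ι := {i | ⟪c, b i⟫ < 0}

theorem subset_downSet_iff [Fintype ι] {c : E} {b : Basis ι ℝ E} {T : Finset ι} :
    T ⊆ downSet c b ↔ ∀ i ∈ T, ⟪c, b i⟫ < 0 := by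
  simp [downSet, subset_iff]

theorem mem_coordFace {V : Finset E} {v w : E} {b : Basis ι ℝ E} {T : Finset ι} :
    w ∈ coordFace V v b T ↔ w ∈ V ∧ ∀ i ∉ T, b.repr (w - v) i = 0 :=
  mem_filter

theorem inner_eq_sum_repr [Fintype ι] (b : Basis ι ℝ E) (c x : E) :
    ⟪c, x⟫ = ∑ i, b.repr x i * ⟪c, b i⟫ := by
  conv_lhs => rw [← b.sum_repr x]
  simp only [inner_sum, real_inner_smul_right]

theorem exists_inner_eq [FiniteDimensional ℝ E] (f : E →ₗ[ℝ] ℝ) : ∃ c : E, ∀ x, ⟪c, x⟫ = f x :=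
  ⟨(InnerProductSpace.toDual ℝ E).symm (LinearMap.toContinuousLinearMap f), fun x => by
    rw [InnerProductSpace.toDual_symm_apply, LinearMap.coe_toContinuousLinearMap']⟩

theorem IsVertexConeBasis.reindex {ι' : Type*} {V : Finset E} {v : E}
    {b : Basis ι ℝ E} (hb : IsVertexConeBasis V v b) (e : ι ≃ ι') :
    IsVertexConeBasis V v (b.reindex e) where
  mem := hb.mem
  repr_nonneg w hw i := by
    rw [Basis.repr_reindex_apply]
    exact hb.repr_nonneg w hw _
  exists_sub_eq_smul i := by
    simpa only [Basis.reindex_apply] using hb.exists_sub_eq_smul (e.symm i)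

namespace IsVertexConeBasis

variable {V : Finset E} {v c : E} {b : Basis ι ℝ E}

theorem self_mem_coordFace (hb : IsVertexConeBasis V v b) (T : Finset ι) :
    v ∈ coordFace V v b T :=
  mem_coordFace.2 ⟨hb.mem, fun i _ => by simp⟩

theorem exists_mem_coordFace_iff (hb : IsVertexConeBasis V v b) (i : ι) :
    ∃ w ∈ V, ∃ s : ℝ, 0 < s ∧ w - v = s • b i ∧ ∀ T, w ∈ coordFace V v b T ↔ i ∈ T := by
  obtain ⟨w, hw, s, hs, hws⟩ := hb.exists_sub_eq_smul i
  refine ⟨w, hw, s, hs, hws, fun T => ?_⟩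
  simp only [mem_coordFace, hws, map_smul, Basis.repr_self, Finsupp.smul_apply,
    Finsupp.single_apply, smul_eq_mul, mul_ite, mul_one, mul_zero, ite_eq_right_iff, hw, true_and]
  exact ⟨fun h => by_contra fun hi => hs.ne' (h i hi rfl), fun hi j hj hji => absurd (hji ▸ hi) hj⟩

theorem coordFace_injective (hb : IsVertexConeBasis V v b) :
    Function.Injective (coordFace V v b) := fun T T' h => Finset.ext fun i => by
  obtain ⟨w, -, -, -, -, hwT⟩ := hb.exists_mem_coordFace_iff i
  rw [← hwT, ← hwT, h]

theorem inner_nonpos_of_mem_argmaxSet (hb : IsVertexConeBasis V v b) (hvc : v ∈ argmaxSet V c)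
    (i : ι) : ⟪c, b i⟫ ≤ 0 := by
  obtain ⟨w, hw, s, hs, hws, -⟩ := hb.exists_mem_coordFace_iff i
  have : ⟪c, w - v⟫ ≤ 0 := by
    rw [inner_sub_right, sub_nonpos]
    exact (mem_argmaxSet.1 hvc).2 w hw
  rw [hws, real_inner_smul_right] at this
  exact nonpos_of_mul_nonpos_right this hs

variable [Fintype ι]

theorem argmaxSet_eq_coordFace (hb : IsVertexConeBasis V v b) (hvc : v ∈ argmaxSet V c) :
    argmaxSet V c = coordFace V v b {i | ⟪c, b i⟫ = 0} := by
  have hterm : ∀ w ∈ V, ∀ i, b.repr (w - v) i * ⟪c, b i⟫ ≤ 0 := fun w hw i =>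
    mul_nonpos_of_nonneg_of_nonpos (hb.repr_nonneg w hw i) (hb.inner_nonpos_of_mem_argmaxSet hvc i)
  rw [argmaxSet_eq_of_inner_sub_nonpos hb.mem fun w hw => by
    rw [inner_eq_sum_repr b]; exact sum_nonpos fun i _ => hterm w hw i]
  refine Finset.ext fun w => ?_
  rw [mem_filter, mem_coordFace]
  refine and_congr_right fun hw => ?_
  rw [inner_eq_sum_repr b, sum_eq_zero_iff_of_nonpos fun i _ => hterm w hw i]
  simp only [mem_univ, true_implies, mul_eq_zero, mem_filter, true_and]
  exact forall_congr' fun i => ⟨fun h hi => h.resolve_right hi, fun h => or_iff_not_imp_right.2 h⟩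

theorem exists_argmaxSet_eq_coordFace [FiniteDimensional ℝ E] (hb : IsVertexConeBasis V v b)
    (T : Finset ι) : ∃ c, argmaxSet V c = coordFace V v b T := by
  obtain ⟨c, hc⟩ := exists_inner_eq (-∑ i ∈ Tᶜ, b.coord i)
  have hc' : ∀ w ∈ V, ⟪c, w - v⟫ = -∑ i ∈ Tᶜ, b.repr (w - v) i := fun w _ => by
    simp [hc]
  have hnonneg : ∀ w ∈ V, ∀ i ∈ Tᶜ, 0 ≤ b.repr (w - v) i := fun w hw i _ => hb.repr_nonneg w hw i
  refine ⟨c, ?_⟩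
  rw [argmaxSet_eq_of_inner_sub_nonpos hb.mem fun w hw => by
    rw [hc' w hw, neg_nonpos]; exact sum_nonneg (hnonneg w hw)]
  refine Finset.ext fun w => ?_
  rw [mem_filter, mem_coordFace]
  refine and_congr_right fun hw => ?_
  rw [hc' w hw, neg_eq_zero, sum_eq_zero_iff_of_nonneg (hnonneg w hw)]
  simp only [mem_compl]

theorem vectorSpan_coordFace (hb : IsVertexConeBasis V v b) (T : Finset ι) :
    vectorSpan ℝ (coordFace V v b T : Set E) = Submodule.span ℝ (Set.range fun i : T => b i) := by
  rw [vectorSpan_eq_span_vsub_set_right ℝ (mem_coe.2 (hb.self_mem_coordFace T))]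
  refine le_antisymm (Submodule.span_le.2 ?_) (Submodule.span_le.2 ?_)
  · rintro _ ⟨w, hw, rfl⟩
    obtain ⟨-, hwT⟩ := mem_coordFace.1 hw
    change w - v ∈ _
    rw [← b.sum_repr (w - v)]
    refine Submodule.sum_mem _ fun i _ => ?_
    by_cases hi : i ∈ T
    · exact Submodule.smul_mem _ _ (Submodule.subset_span ⟨⟨i, hi⟩, rfl⟩)
    · rw [hwT i hi, zero_smul]
      exact Submodule.zero_mem _
  · rintro _ ⟨⟨i, hi⟩, rfl⟩
    obtain ⟨w, -, s, hs, hws, hwT⟩ := hb.exists_mem_coordFace_iff i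
    have : b i = s⁻¹ • (w -ᵥ v) := by rw [vsub_eq_sub, hws, inv_smul_smul₀ hs.ne']
    change b i ∈ _
    rw [this]
    exact Submodule.smul_mem _ _ (Submodule.subset_span ⟨w, (hwT T).2 hi, rfl⟩)

theorem finrank_vectorSpan_coordFace (hb : IsVertexConeBasis V v b) (T : Finset ι) :
    finrank ℝ (vectorSpan ℝ (coordFace V v b T : Set E)) = T.card := by
  rw [hb.vectorSpan_coordFace, finrank_span_eq_card (b := fun i : T => b i)
    (b.linearIndependent.comp _ Subtype.val_injective), Fintype.card_coe]

theorem forall_inner_lt_iff (hb : IsVertexConeBasis V v b) (T : Finset ι) :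
    (∀ w ∈ coordFace V v b T, w ≠ v → ⟪c, w⟫ < ⟪c, v⟫) ↔ T ⊆ downSet c b := by
  rw [subset_downSet_iff]
  refine ⟨fun h i hi => ?_, fun h w hw hwv => ?_⟩
  · obtain ⟨w, -, s, hs, hws, hwT⟩ := hb.exists_mem_coordFace_iff i
    have hwv : w ≠ v := fun hwv => by
      rw [hwv, sub_self, eq_comm, smul_eq_zero] at hws
      exact hws.elim hs.ne' (b.ne_zero i)
    have := h w ((hwT T).2 hi) hwv
    rw [← sub_neg, ← inner_sub_right, hws, real_inner_smul_right] at this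
    exact neg_of_mul_neg_right this hs.le
  · obtain ⟨hwV, hwT⟩ := mem_coordFace.1 hw
    have hpos : ∃ i ∈ T, 0 < b.repr (w - v) i := by
      by_contra! hall
      refine hwv (sub_eq_zero.1 (b.repr.injective ?_))
      rw [map_zero]
      ext i
      by_cases hi : i ∈ T
      · exact le_antisymm (hall i hi) (hb.repr_nonneg w hwV i)
      · exact hwT i hi
    obtain ⟨i₀, hi₀T, hi₀⟩ := hpos
    rw [← sub_neg, ← inner_sub_right, inner_eq_sum_repr b]
    refine sum_neg' (fun i _ => ?_) ⟨i₀, mem_univ _, mul_neg_of_pos_of_neg hi₀ (h i₀ hi₀T)⟩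
    by_cases hi : i ∈ T
    · exact mul_nonpos_of_nonneg_of_nonpos (hb.repr_nonneg w hwV i) (h i hi).le
    · rw [hwT i hi, zero_mul]

theorem convexHull_coordFace_inter [FiniteDimensional ℝ E] (hb : IsVertexConeBasis V v b)
    (T : Finset ι) : convexHull ℝ (coordFace V v b T : Set E) ∩ V = coordFace V v b T := by
  obtain ⟨c, hc⟩ := hb.exists_argmaxSet_eq_coordFace T
  rw [← hc, convexHull_argmaxSet_inter]

theorem eq_of_coordFace_eq {b : E → Basis ι ℝ E} {v' : E} {T T' : Finset ι}
    (hb : IsVertexConeBasis V v (b v)) (hb' : IsVertexConeBasis V v' (b v'))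
    (hT : T ⊆ downSet c (b v)) (hT' : T' ⊆ downSet c (b v'))
    (h : coordFace V v (b v) T = coordFace V v' (b v') T') : v = v' ∧ T = T' := by
  have hvv' : v = v' := by
    by_contra hne
    have h₁ := (hb.forall_inner_lt_iff T).2 hT v' (h ▸ hb'.self_mem_coordFace T') (Ne.symm hne)
    have h₂ := (hb'.forall_inner_lt_iff T').2 hT' v (h ▸ hb.self_mem_coordFace T) hne
    exact h₁.not_gt h₂
  subst hvv'
  exact ⟨rfl, hb.coordFace_injective h⟩

end IsVertexConeBasis

theorem exists_isVertexConeBasis [FiniteDimensional ℝ E] {V : Finset E} {c₀ v : E}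
    (hsp : affineSpan ℝ (V : Set E) = ⊤) (hv : argmaxSet V c₀ = {v})
    (hcard : (edgeDirs V c₀ v).card = finrank ℝ E) :
    ∃ b : Basis (Fin (finrank ℝ E)) ℝ E, IsVertexConeBasis V v b := by
  have hvV := mem_of_argmaxSet_eq_singleton hv
  have hspan : ⊤ ≤ Submodule.span ℝ (Set.range fun p : edgeDirs V c₀ v => (p : E)) := by
    rw [← AffineSubspace.direction_top ℝ E E, ← hsp, direction_affineSpan,
      vectorSpan_eq_span_vsub_set_right ℝ (mem_coe.2 hvV), Submodule.span_le]
    rintro _ ⟨w, hw, rfl⟩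
    obtain ⟨μ, -, hμ⟩ := exists_nonneg_sum_edgeDirs hv hw
    change w - v ∈ _
    rw [hμ]
    exact Submodule.sum_mem _ fun p hp =>
      Submodule.smul_mem _ _ (Submodule.subset_span ⟨⟨p, hp⟩, rfl⟩)
  have hcard' : Fintype.card (edgeDirs V c₀ v) = finrank ℝ E := by
    rw [Fintype.card_coe, hcard]
  let b := Basis.mk (linearIndependent_of_top_le_span_of_card_eq_finrank hspan hcard') hspan
  have hb : IsVertexConeBasis V v b := by
    refine ⟨hvV, fun w hw p => ?_, fun p => ?_⟩
    · obtain ⟨μ, hμ0, hμ⟩ := exists_nonneg_sum_edgeDirs hv hw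
      have : w - v = ∑ p : edgeDirs V c₀ v, μ p • b p := by
        rw [hμ, ← sum_coe_sort]
        simp only [b, Basis.mk_apply]
      rw [this, b.repr_sum_self]
      exact hμ0 p p.2
    · obtain ⟨w, hw, hwv, hwp⟩ := mem_vertexFigure.1 (mem_filter.1 p.2).1
      have hpos := inner_sub_pos_of_argmaxSet_eq_singleton hv hw hwv
      refine ⟨w, hw, _, hpos, ?_⟩
      rw [Basis.mk_apply, ← hwp]
      exact sub_eq_smul_vertexDir hpos.ne'
  exact ⟨_, hb.reindex (Fintype.equivFinOfCardEq hcard')⟩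

theorem exists_argmaxSet_eq_coordFace_subset_downSet [Fintype ι] {V : Finset E} {c : E}
    {b : E → Basis ι ℝ E} (hV : V.Nonempty) (hc : Set.InjOn (fun w => ⟪c, w⟫) V)
    (hb : ∀ v ∈ vertexSet V, IsVertexConeBasis V v (b v)) (c' : E) :
    ∃ v ∈ vertexSet V, ∃ T ⊆ downSet c (b v), argmaxSet V c' = coordFace V v (b v) T := by
  obtain ⟨v, hvc', hv, htop⟩ := exists_mem_vertexSet_forall_inner_lt hV hc c'
  have hF := (hb v hv).argmaxSet_eq_coordFace hvc'
  exact ⟨v, hv, _, ((hb v hv).forall_inner_lt_iff _).1 (hF ▸ htop), hF⟩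

theorem exists_mem_vertexSet_downSet_eq_univ [Fintype ι] {V : Finset E} {c : E}
    {b : E → Basis ι ℝ E} (hV : V.Nonempty) (hc : Set.InjOn (fun w => ⟪c, w⟫) V)
    (hb : ∀ v ∈ vertexSet V, IsVertexConeBasis V v (b v)) :
    ∃ v ∈ vertexSet V, downSet c (b v) = univ := by
  obtain ⟨v, hv⟩ := argmaxSet_nonempty hV c
  have hvV : v ∈ vertexSet V := mem_vertexSet.2 ⟨c, argmaxSet_eq_singleton_of_injOn hc hv⟩
  refine ⟨v, hvV, univ_subset_iff.1 (((hb v hvV).forall_inner_lt_iff univ).1 fun w hw hwv => ?_)⟩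
  exact inner_lt_of_mem_argmaxSet_of_injOn hc hv (mem_coordFace.1 hw).1 hwv

end VertexCone

theorem isFaceOf_convexHull_iff {V : Finset E4} (hV : V.Nonempty) {F : Set E4} :
    IsFaceOf (convexHull ℝ (V : Set E4)) F ↔ ∃ c, F = convexHull ℝ (argmaxSet V c : Set E4) := by
  refine ⟨fun ⟨_, c, hF⟩ => ⟨c, hF.trans (exposed_convexHull_eq hV c)⟩, fun ⟨c, hF⟩ => ?_⟩
  obtain ⟨w, hw⟩ := argmaxSet_nonempty hV c
  exact ⟨⟨w, hF ▸ subset_convexHull ℝ _ hw⟩, c, hF.trans (exposed_convexHull_eq hV c).symm⟩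

theorem faceDim_convexHull (s : Set E4) :
    faceDim (convexHull ℝ s) = finrank ℝ (vectorSpan ℝ s) := by
  rw [faceDim, affineSpan_convexHull, direction_affineSpan]

theorem faceDim_singleton (v : E4) : faceDim {v} = 0 := by
  rw [faceDim, direction_affineSpan, vectorSpan_singleton, finrank_bot]

theorem card_edges_eq_card_edgeDirs {V : Finset E4} {c₀ v : E4} (hv : argmaxSet V c₀ = {v}) :
    Nat.card {e : Set E4 // IsFaceOf (convexHull ℝ (V : Set E4)) e ∧ faceDim e = 1 ∧ {v} ⊆ e} =
      (edgeDirs V c₀ v).card := by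
  have hV : V.Nonempty := ⟨v, mem_of_argmaxSet_eq_singleton hv⟩
  have hedge (p : edgeDirs V c₀ v) :
      ∃ c, argmaxSet V c = rayPoints V v p :=
    exists_argmaxSet_eq_rayPoints hv p.2
  have hvF (p : edgeDirs V c₀ v) : (p : E4) ∈ vertexFigure V c₀ v := (mem_filter.1 p.2).1
  let f : edgeDirs V c₀ v →
      {e : Set E4 // IsFaceOf (convexHull ℝ (V : Set E4)) e ∧ faceDim e = 1 ∧ {v} ⊆ e} :=
    fun p => ⟨convexHull ℝ (rayPoints V v p : Set E4), by
      obtain ⟨c, hc⟩ := hedge p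
      refine ⟨(isFaceOf_convexHull_iff hV).2 ⟨c, by rw [hc]⟩, ?_, ?_⟩
      · rw [faceDim_convexHull, finrank_vectorSpan_rayPoints hv (hvF p)]
      · exact Set.singleton_subset_iff.2 (subset_convexHull ℝ _
          (self_mem_rayPoints (mem_of_argmaxSet_eq_singleton hv) p))⟩
  refine (Nat.card_eq_of_bijective f ⟨fun p p' hpp' => ?_, fun ⟨e, he, hdim, hve⟩ => ?_⟩).symm.trans
    (Nat.card_eq_finsetCard _)
  · obtain ⟨c, hc⟩ := hedge p
    obtain ⟨c', hc'⟩ := hedge p'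
    have h := congrArg (· ∩ (V : Set E4)) (congrArg Subtype.val hpp')
    simp only [f, ← hc, ← hc', convexHull_argmaxSet_inter] at h
    rw [hc, hc', coe_inj] at h
    exact Subtype.ext (eq_of_rayPoints_eq hv (hvF p) (hvF p') h)
  · obtain ⟨c, rfl⟩ := (isFaceOf_convexHull_iff hV).1 he
    have hvc : v ∈ argmaxSet V c := (convexHull_argmaxSet_inter c).subset
      ⟨Set.singleton_subset_iff.1 hve, mem_of_argmaxSet_eq_singleton hv⟩
    rw [faceDim_convexHull] at hdim
    obtain ⟨p, hp, hc⟩ := exists_argmaxSet_eq_rayPoints_of_finrank_eq_one hv hvc hdim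
    exact ⟨⟨p, mem_edgeDirs_of_argmaxSet_eq_rayPoints hv hp hc⟩, Subtype.ext (by
      simp only [f, hc])⟩

theorem exists_isVertexConeBasis_of_simplePolytope {V : Finset E4}
    (hsp : affineSpan ℝ (V : Set E4) = ⊤) (hs : SimplePolytope (convexHull ℝ (V : Set E4))) :
    ∃ b : E4 → Basis (Fin (finrank ℝ E4)) ℝ E4,
      ∀ v ∈ vertexSet V, IsVertexConeBasis V v (b v) := by
  have hcone : ∀ v ∈ vertexSet V,
      ∃ b : Basis (Fin (finrank ℝ E4)) ℝ E4, IsVertexConeBasis V v b := by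
    intro v hv
    obtain ⟨c₀, hc₀⟩ := mem_vertexSet.1 hv
    refine exists_isVertexConeBasis hsp hc₀ ?_
    rw [← card_edges_eq_card_edgeDirs hc₀, finrank_euclideanSpace_fin]
    refine hs {v} ((isFaceOf_convexHull_iff ⟨v, mem_of_argmaxSet_eq_singleton hc₀⟩).2 ⟨c₀, ?_⟩)
      (faceDim_singleton v)
    rw [hc₀, coe_singleton, convexHull_singleton]
  have : Nonempty (Basis (Fin (finrank ℝ E4)) ℝ E4) := ⟨finBasis ℝ E4⟩
  choose! b hb using hcone
  exact ⟨b, hb⟩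

section Counting

variable {ι : Type*} [Fintype ι] {V : Finset E4} {v c : E4}

theorem IsVertexConeBasis.isFaceOf_convexHull_coordFace {b : Basis ι ℝ E4}
    (hb : IsVertexConeBasis V v b) (T : Finset ι) :
    IsFaceOf (convexHull ℝ (V : Set E4)) (convexHull ℝ (coordFace V v b T : Set E4)) := by
  obtain ⟨c, hc⟩ := hb.exists_argmaxSet_eq_coordFace T
  exact (isFaceOf_convexHull_iff ⟨v, hb.mem⟩).2 ⟨c, by rw [hc]⟩

theorem IsVertexConeBasis.faceDim_convexHull_coordFace {b : Basis ι ℝ E4}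
    (hb : IsVertexConeBasis V v b) (T : Finset ι) :
    faceDim (convexHull ℝ (coordFace V v b T : Set E4)) = T.card := by
  rw [faceDim_convexHull, hb.finrank_vectorSpan_coordFace]

theorem fVec_convexHull_eq_sum_choose {b : E4 → Basis ι ℝ E4} (hV : V.Nonempty)
    (hc : Set.InjOn (fun w => ⟪c, w⟫) V) (hb : ∀ v ∈ vertexSet V, IsVertexConeBasis V v (b v))
    (k : ℕ) :
    fVec (convexHull ℝ (V : Set E4)) k = ∑ v ∈ vertexSet V, (downSet c (b v)).card.choose k := by
  set S := (vertexSet V).sigma fun v => (downSet c (b v)).powersetCard k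
  have hS (x : S) : x.1.1 ∈ vertexSet V ∧ x.1.2 ⊆ downSet c (b x.1.1) ∧ x.1.2.card = k := by
    obtain ⟨hv, hT⟩ := mem_sigma.1 x.2
    exact ⟨hv, mem_powersetCard.1 hT⟩
  let f : S → {F : Set E4 // IsFaceOf (convexHull ℝ (V : Set E4)) F ∧ faceDim F = k} :=
    fun x => ⟨convexHull ℝ (coordFace V x.1.1 (b x.1.1) x.1.2 : Set E4),
      (hb _ (hS x).1).isFaceOf_convexHull_coordFace _,
      ((hb _ (hS x).1).faceDim_convexHull_coordFace _).trans (hS x).2.2⟩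
  have hf : Function.Bijective f := by
    refine ⟨fun x y hxy => ?_, fun ⟨F, hF, hFk⟩ => ?_⟩
    · have h := congrArg (· ∩ (V : Set E4)) (congrArg Subtype.val hxy)
      simp only [f, (hb _ (hS x).1).convexHull_coordFace_inter,
        (hb _ (hS y).1).convexHull_coordFace_inter, coe_inj] at h
      obtain ⟨h₁, h₂⟩ := (hb _ (hS x).1).eq_of_coordFace_eq (hb _ (hS y).1) (hS x).2.1
        (hS y).2.1 h
      exact Subtype.ext (Sigma.ext h₁ (heq_of_eq h₂))
    · obtain ⟨c', rfl⟩ := (isFaceOf_convexHull_iff hV).1 hF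
      obtain ⟨v, hv, T, hT, hc'⟩ := exists_argmaxSet_eq_coordFace_subset_downSet hV hc hb c'
      have hTk : T.card = k := by rwa [hc', (hb v hv).faceDim_convexHull_coordFace] at hFk
      exact ⟨⟨⟨v, T⟩, mem_sigma.2 ⟨hv, mem_powersetCard.2 ⟨hT, hTk⟩⟩⟩,
        Subtype.ext (by simp [f, hc'])⟩
  rw [fVec, ← Nat.card_eq_of_bijective f hf, Nat.card_eq_finsetCard, card_sigma]
  simp only [card_powersetCard]

end Counting

theorem sum_choose_one_add_choose_two_lt {α : Type*} {s : Finset α} {d : α → ℕ}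
    (hd : ∀ a ∈ s, d a ≤ 4) (htop : ∃ a ∈ s, d a = 4) :
    ∑ a ∈ s, (d a).choose 1 + ∑ a ∈ s, (d a).choose 2 <
      3 * (∑ a ∈ s, (d a).choose 0 + ∑ a ∈ s, (d a).choose 3) := by
  have hle : ∀ n ≤ 4, n.choose 1 + n.choose 2 ≤ 3 * (n.choose 0 + n.choose 3) := by decide
  obtain ⟨a, ha, hda⟩ := htop
  rw [← sum_add_distrib, ← sum_add_distrib, mul_sum]
  exact sum_lt_sum (fun a ha => hle _ (hd a ha)) ⟨a, ha, by rw [hda]; decide⟩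

/-- Every simple 4-polytope has fatness strictly less than 3. -/
theorem simple_fatness_lt_three (P : Set E4) (hP : IsPolytope4 P)
    (hs : SimplePolytope P) :
    (fVec P 1 : ℝ) + (fVec P 2 : ℝ) < 3 * ((fVec P 0 : ℝ) + (fVec P 3 : ℝ)) := by
  obtain ⟨V, hsp, rfl⟩ := hP
  have hV : V.Nonempty := by
    rw [← coe_nonempty, ← affineSpan_nonempty (k := ℝ), hsp, AffineSubspace.top_coe]
    exact Set.univ_nonempty
  obtain ⟨c, hc⟩ := exists_injOn_inner V
  obtain ⟨b, hb⟩ := exists_isVertexConeBasis_of_simplePolytope hsp hs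
  have hd : ∀ v ∈ vertexSet V, (downSet c (b v)).card ≤ 4 := fun v _ =>
    (card_le_univ _).trans (by simp)
  obtain ⟨v₀, hv₀, htop⟩ := exists_mem_vertexSet_downSet_eq_univ hV hc hb
  have key := sum_choose_one_add_choose_two_lt hd ⟨v₀, hv₀, by simp [htop]⟩
  simp only [fVec_convexHull_eq_sum_choose hV hc hb]
  exact_mod_cast key
end
end

section
/- Let g ≥ 1, let F be a finite field with exactly 4g+1 elements, and let α ∈ F be an element of multiplicative order 4g (so α generates the unit group and α ≠ 1). Then for any two distinct elements v, v' ∈ F there exist a unique s ∈ F and a unique k ∈ {0, 1, …, 4g−1} such that v = s + (α^k − 1)/(α − 1) and v' = s + (α^{k+1} − 1)/(α − 1). (This expresses that the 1-skeleton of the abelian cover S_g' is the complete graph on its q = 4g+1 vertices.) -/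
/-- For a finite field `F` with `4g+1` elements and `α` of multiplicative order
`4g`, any two distinct `v, v' ∈ F` arise, for a unique `s ∈ F` and a unique
`k ∈ {0, …, 4g−1}`, as `v = s + (α^k − 1)/(α − 1)` and
`v' = s + (α^{k+1} − 1)/(α − 1)`: the 1-skeleton of the abelian cover `S_g'`
is the complete graph on its `q = 4g+1` vertices. -/
theorem skeleton_complete (g : ℕ) (hg : 1 ≤ g) (F : Type*) [Field F] [Fintype F]
    (hF : Fintype.card F = 4 * g + 1) (α : F) (hα : orderOf α = 4 * g)
    (v v' : F) (hne : v ≠ v') :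
    ∃! p : F × Fin (4 * g),
      v = p.1 + (α ^ (p.2 : ℕ) - 1) / (α - 1) ∧
      v' = p.1 + (α ^ ((p.2 : ℕ) + 1) - 1) / (α - 1) := by
  have h4g : 0 < 4 * g := by omega
  have hfo : IsOfFinOrder α := orderOf_pos_iff.mp (hα ▸ h4g)
  have hα0 : α ≠ 0 := hfo.isUnit.ne_zero
  have hα1 : α ≠ 1 := by
    intro h; rw [h, orderOf_one] at hα; omega
  have hd : α - 1 ≠ 0 := sub_ne_zero.mpr hα1
  -- the unit corresponding to α generates Fˣ
  set u : Fˣ := Units.mk0 α hα0 with hu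
  have hcard : Nat.card Fˣ = 4 * g := by
    rw [Nat.card_units, Nat.card_eq_fintype_card, hF]; omega
  have hou : orderOf u = 4 * g := by
    rw [← hα, ← Units.val_mk0 hα0, orderOf_units]
  have htop : Subgroup.zpowers u = ⊤ := by
    apply Subgroup.eq_top_of_card_eq
    rw [Nat.card_zpowers, hou, hcard]
  -- existence and uniqueness of k with α ^ k = v' - v
  have hx0 : v' - v ≠ 0 := sub_ne_zero.mpr (Ne.symm hne)
  obtain ⟨n, hn⟩ : ∃ n : ℕ, α ^ n = v' - v := by
    have hfu : IsOfFinOrder u := orderOf_pos_iff.mp (hou ▸ h4g)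
    obtain ⟨m, hm⟩ := hfu.mem_powers_iff_mem_zpowers.mpr
      (htop ▸ Subgroup.mem_top (Units.mk0 (v' - v) hx0))
    exact ⟨m, by have := congrArg (Units.val) hm; simpa [hu] using this⟩
  have hmod : α ^ (n % (4 * g)) = v' - v := by
    rw [← hα, pow_mod_orderOf, hn]
  -- key: the pair equations are equivalent to (α ^ k = v' - v ∧ s = ...)
  have key : ∀ p : F × Fin (4 * g),
      (v = p.1 + (α ^ (p.2 : ℕ) - 1) / (α - 1) ∧
       v' = p.1 + (α ^ ((p.2 : ℕ) + 1) - 1) / (α - 1)) ↔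
      (α ^ (p.2 : ℕ) = v' - v ∧ p.1 = v - (α ^ (p.2 : ℕ) - 1) / (α - 1)) := by
    rintro ⟨s, k⟩
    constructor
    · rintro ⟨h1, h2⟩
      have : v' - v = α ^ (k : ℕ) := by
        rw [h1, h2]; field_simp; ring
      exact ⟨this.symm, by rw [h1]; ring⟩
    · rintro ⟨h1, h2⟩
      refine ⟨by rw [h2]; ring, ?_⟩
      rw [h2]
      have : α ^ ((k : ℕ) + 1) - 1 = (v' - v) * (α - 1) + (α ^ (k : ℕ) - 1) := by
        rw [← h1]; ring
      rw [this]
      field_simp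
      ring
  refine ⟨⟨v - (α ^ (n % (4 * g)) - 1) / (α - 1), ⟨n % (4 * g), Nat.mod_lt n h4g⟩⟩, ?_, ?_⟩
  · exact (key _).mpr ⟨hmod, rfl⟩
  · rintro ⟨s, k⟩ hp
    rw [key] at hp
    obtain ⟨h1, h2⟩ := hp
    have hk : (k : ℕ) = n % (4 * g) := by
      refine pow_injOn_Iio_orderOf (x := α) ?_ ?_ ?_
      · rw [hα]; exact k.isLt
      · rw [hα]; exact Nat.mod_lt n h4g
      · show α ^ (k : ℕ) = α ^ (n % (4 * g))
        rw [hmod]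
        exact h1
    have : k = (⟨n % (4 * g), Nat.mod_lt n h4g⟩ : Fin (4 * g)) := Fin.ext hk
    subst this
    simpa using h2
end

section
/- Let g ≥ 1, let F be a finite field with exactly 4g+1 elements, and let α ∈ F be an element of multiplicative order 4g. Then for any two distinct elements s, s' ∈ F there exist unique k, ℓ ∈ {0, 1, …, 4g−1} such that s + (α^k − 1)/(α − 1) = s' + (α^{ℓ+1} − 1)/(α − 1) and s + (α^{k+1} − 1)/(α − 1) = s' + (α^ℓ − 1)/(α − 1). (This expresses that the dual graph of the abelian cover S_g' is complete: any two facets share exactly one edge.) -/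
/-- For a finite field `F` with `4g+1` elements and `α` of multiplicative order
`4g`, for any two distinct `s, s' ∈ F` there are unique
`k, ℓ ∈ {0, …, 4g−1}` with `s + (α^k − 1)/(α − 1) = s' + (α^{ℓ+1} − 1)/(α − 1)`
and `s + (α^{k+1} − 1)/(α − 1) = s' + (α^ℓ − 1)/(α − 1)`: the dual graph of the
abelian cover `S_g'` is complete, i.e. any two facets share exactly one edge. -/
theorem dual_graph_complete (g : ℕ) (hg : 1 ≤ g) (F : Type*) [Field F] [Fintype F]
    (hF : Fintype.card F = 4 * g + 1) (α : F) (hα : orderOf α = 4 * g)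
    (s s' : F) (hne : s ≠ s') :
    ∃! p : Fin (4 * g) × Fin (4 * g),
      s + (α ^ (p.1 : ℕ) - 1) / (α - 1) = s' + (α ^ ((p.2 : ℕ) + 1) - 1) / (α - 1) ∧
      s + (α ^ ((p.1 : ℕ) + 1) - 1) / (α - 1) = s' + (α ^ (p.2 : ℕ) - 1) / (α - 1) := by
  have hgpos : 0 < 4 * g := by omega
  have hαpow : α ^ (4 * g) = 1 := by rw [← hα]; exact pow_orderOf_eq_one α
  have hα0 : α ≠ 0 := by
    intro h
    rw [h, zero_pow (by omega)] at hαpow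
    exact one_ne_zero hαpow.symm
  have hα1 : α - 1 ≠ 0 := by
    intro h
    rw [sub_eq_zero.mp h, orderOf_one] at hα; omega
  have hαn1 : (1 : F) + α ≠ 0 := by
    intro h
    have hα' : α = -1 := by linear_combination h
    have h2 : α ^ 2 = 1 := by rw [hα']; ring
    have := Nat.le_of_dvd (by norm_num) (hα ▸ orderOf_dvd_of_pow_eq_one h2)
    omega
  -- injectivity of k ↦ α^k on [0, 4g)
  have hinj : ∀ a b : ℕ, a < 4 * g → b < 4 * g → α ^ a = α ^ b → a = b := by
    have key : ∀ a b : ℕ, a ≤ b → b < 4 * g → α ^ a = α ^ b → a = b := by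
      intro a b hab hb h
      have hpow : α ^ a * α ^ (b - a) = α ^ a * 1 := by
        rw [mul_one, ← pow_add, Nat.add_sub_cancel' hab, h]
      have h1 : α ^ (b - a) = 1 := mul_left_cancel₀ (pow_ne_zero a hα0) hpow
      have hdvd := hα ▸ orderOf_dvd_of_pow_eq_one h1
      have : b - a = 0 := Nat.eq_zero_of_dvd_of_lt hdvd (by omega)
      omega
    intro a b ha hb h
    rcases le_total a b with hab | hab
    · exact key a b hab hb h
    · exact (key b a hab ha h.symm).symm
  -- α^(2g) = -1
  have h2g : α ^ (2 * g) = -1 := by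
    have hsq : α ^ (2 * g) * α ^ (2 * g) = 1 := by
      rw [← pow_add, show 2 * g + 2 * g = 4 * g by omega, hαpow]
    rcases mul_self_eq_one_iff.mp hsq with h | h
    · exfalso
      have := Nat.le_of_dvd (by omega) (hα ▸ orderOf_dvd_of_pow_eq_one h)
      omega
    · exact h
  set c : F := (s' - s) * (α - 1) with hc
  have hc0 : c ≠ 0 := mul_ne_zero (sub_ne_zero.mpr (Ne.symm hne)) hα1
  set t : F := c / (-(1 + α)) with ht
  have ht0 : t ≠ 0 := div_ne_zero hc0 (neg_ne_zero.mpr hαn1)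
  have htc : t * (-(1 + α)) = c := div_mul_cancel₀ c (neg_ne_zero.mpr hαn1)
  -- α generates Fˣ: find ℓ0 with α^ℓ0 = t
  obtain ⟨ℓ0, hℓ0⟩ : ∃ n : ℕ, α ^ n = t := by
    set u : Fˣ := Units.mk0 α hα0 with hu
    have hou : orderOf u = 4 * g := by
      rw [← hα, ← orderOf_units, hu, Units.val_mk0]
    have htop : Subgroup.zpowers u = ⊤ := by
      apply Subgroup.eq_top_of_card_eq
      rw [Nat.card_zpowers, hou, Nat.card_units, Nat.card_eq_fintype_card, hF]
      omega
    set v : Fˣ := Units.mk0 t ht0 with hv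
    have hvmem : v ∈ Subgroup.zpowers u := by rw [htop]; trivial
    rw [← mem_powers_iff_mem_zpowers] at hvmem
    obtain ⟨n, hn⟩ := hvmem
    exact ⟨n, by simpa [hu, hv, Units.ext_iff] using congrArg Units.val hn⟩
  set ℓ : ℕ := ℓ0 % (4 * g) with hℓdef
  have hℓlt : ℓ < 4 * g := Nat.mod_lt _ hgpos
  have hℓ : α ^ ℓ = t := by
    rw [hℓdef, ← hα, pow_mod_orderOf, hℓ0]
  set k : ℕ := (ℓ + 2 * g) % (4 * g) with hkdef
  have hklt : k < 4 * g := Nat.mod_lt _ hgpos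
  have hk : α ^ k = -t := by
    rw [hkdef, ← hα, pow_mod_orderOf, pow_add, hℓ, h2g]
    ring
  have key1 : α ^ k - α ^ (ℓ + 1) = c := by
    rw [hk, pow_succ, hℓ]; linear_combination htc
  have key2 : α ^ (k + 1) - α ^ ℓ = c := by
    rw [pow_succ, hk, hℓ]; linear_combination htc
  refine ⟨(⟨k, hklt⟩, ⟨ℓ, hℓlt⟩), ⟨?_, ?_⟩, ?_⟩
  · show s + (α ^ k - 1) / (α - 1) = s' + (α ^ (ℓ + 1) - 1) / (α - 1)
    field_simp
    linear_combination key1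
  · show s + (α ^ (k + 1) - 1) / (α - 1) = s' + (α ^ ℓ - 1) / (α - 1)
    field_simp
    linear_combination key2
  · rintro ⟨k', ℓ'⟩ ⟨h1, h2⟩
    simp only at h1 h2
    have e1 : α ^ (k' : ℕ) - α ^ ((ℓ' : ℕ) + 1) = c := by
      field_simp at h1
      linear_combination h1
    have e2 : α ^ ((k' : ℕ) + 1) - α ^ (ℓ' : ℕ) = c := by
      field_simp at h2
      linear_combination h2
    have p1 : α ^ ((ℓ' : ℕ) + 1) = α ^ (ℓ' : ℕ) * α := pow_succ α _
    have p2 : α ^ ((k' : ℕ) + 1) = α ^ (k' : ℕ) * α := pow_succ α _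
    have hsum : (α - 1) * (α ^ (k' : ℕ) + α ^ (ℓ' : ℕ)) = 0 := by
      linear_combination e2 - e1 - p2 - p1
    have hkl : α ^ (k' : ℕ) = -α ^ (ℓ' : ℕ) := by
      rcases mul_eq_zero.mp hsum with h | h
      · exact absurd h hα1
      · linear_combination h
    have hℓ' : α ^ (ℓ' : ℕ) = t := by
      have hmul : α ^ (ℓ' : ℕ) * (-(1 + α)) = c := by
        linear_combination e1 - p1 - hkl
      rw [ht, eq_div_iff (neg_ne_zero.mpr hαn1)]
      exact hmul
    have hℓeq : (ℓ' : ℕ) = ℓ := hinj _ _ ℓ'.isLt hℓlt (by rw [hℓ', hℓ])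
    have hkeq : (k' : ℕ) = k := hinj _ _ k'.isLt hklt (by rw [hkl, hℓ', hk])
    ext <;> simp [hkeq, hℓeq]
end

section
/- Let g ≥ 1, let F be a finite field with exactly 4g+1 elements, and let α ∈ F be an element of multiplicative order 4g. Then for any two distinct elements v, v' ∈ F there exist a unique s ∈ F and a unique k ∈ {0, 1, …, 4g−1} such that v = s + (α^k − 1)/(α − 1) and v' = s + (α^{k+2g} − 1)/(α − 1). (This expresses that no two distinct vertices of S_g' are opposite vertices in two different facets.) -/
/-- For a finite field `F` with `4g+1` elements and `α` of multiplicative order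
`4g`, any two distinct `v, v' ∈ F` arise, for a unique `s ∈ F` and a unique
`k ∈ {0, …, 4g−1}`, as `v = s + (α^k − 1)/(α − 1)` and
`v' = s + (α^{k+2g} − 1)/(α − 1)`: no two distinct vertices of `S_g'` are
opposite vertices in two different facets. -/
theorem opposite_vertices_unique (g : ℕ) (hg : 1 ≤ g) (F : Type*) [Field F] [Fintype F]
    (hF : Fintype.card F = 4 * g + 1) (α : F) (hα : orderOf α = 4 * g)
    (v v' : F) (hne : v ≠ v') :
    ∃! p : F × Fin (4 * g),
      v = p.1 + (α ^ (p.2 : ℕ) - 1) / (α - 1) ∧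
      v' = p.1 + (α ^ ((p.2 : ℕ) + 2 * g) - 1) / (α - 1) := by
  have hgpos : 0 < 4 * g := by omega
  -- α ≠ 0
  have hα0 : α ≠ 0 := by
    intro h
    have h1 := pow_orderOf_eq_one α
    rw [hα, h, zero_pow (by omega : 4 * g ≠ 0)] at h1
    exact zero_ne_one h1
  -- α ≠ 1
  have hα1 : α - 1 ≠ 0 := by
    intro h
    have : α = 1 := by linear_combination h
    rw [this, orderOf_one] at hα; omega
  -- 2 ≠ 0
  have h2 : (2 : F) ≠ 0 := by
    refine Ring.two_ne_zero ?_
    intro h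
    have := FiniteField.even_card_iff_char_two.mp h
    omega
  -- α ^ (2g) = -1
  have hpow4g : α ^ (4 * g) = 1 := by rw [← hα]; exact pow_orderOf_eq_one α
  have hm : α ^ (2 * g) = -1 := by
    have hsq : α ^ (2 * g) * α ^ (2 * g) = 1 := by
      rw [← pow_add]; rw [show 2 * g + 2 * g = 4 * g by ring]; exact hpow4g
    rcases mul_self_eq_one_iff.mp hsq with h | h
    · exfalso
      have hdvd := orderOf_dvd_of_pow_eq_one h
      rw [hα] at hdvd
      have := Nat.le_of_dvd (by omega) hdvd
      omega
    · exact h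
  -- units
  have hαu0 : IsUnit α := isUnit_iff_ne_zero.mpr hα0
  set u : Fˣ := hαu0.unit with hu_def
  have huc : (u : F) = α := hαu0.unit_spec
  have hu : orderOf u = 4 * g := by
    rw [← hα, ← huc, orderOf_units]
  haveI : Fintype Fˣ := Fintype.ofFinite _
  have hcard : Fintype.card Fˣ = 4 * g := by rw [← Nat.card_eq_fintype_card, Nat.card_units, Nat.card_eq_fintype_card, hF]; omega
  have hinj : Function.Injective (fun k : Fin (4 * g) => u ^ (k : ℕ)) := by
    intro i j hij
    exact Fin.ext (pow_injOn_Iio_orderOf (by rw [hu]; exact i.isLt)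
      (by rw [hu]; exact j.isLt) hij)
  have hsurj : Function.Surjective (fun k : Fin (4 * g) => u ^ (k : ℕ)) :=
    ((Fintype.bijective_iff_injective_and_card _).mpr ⟨hinj, by simp [hcard]⟩).2
  set c : F := (v - v') * (α - 1) / 2 with hc_def
  have hc : c ≠ 0 := by
    simp only [hc_def, div_ne_zero_iff, mul_ne_zero_iff]
    exact ⟨⟨sub_ne_zero.mpr hne, hα1⟩, h2⟩
  obtain ⟨k₀, hk₀⟩ := hsurj (Units.mk0 c hc)
  have hαk₀ : α ^ (k₀ : ℕ) = c := by
    have := congrArg Units.val hk₀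
    simpa [← huc] using this
  refine ⟨(v - (α ^ (k₀ : ℕ) - 1) / (α - 1), k₀), ⟨by ring, ?_⟩, ?_⟩
  · show v' = v - (α ^ (k₀ : ℕ) - 1) / (α - 1) + (α ^ ((k₀ : ℕ) + 2 * g) - 1) / (α - 1)
    rw [pow_add, hm, hαk₀, hc_def]
    field_simp
    ring
  · rintro ⟨s, k⟩ ⟨h1, h2'⟩
    simp only at h1 h2' ⊢
    have e : v' - v = (α ^ (k : ℕ) * α ^ (2 * g) - α ^ (k : ℕ)) / (α - 1) := by
      rw [h1, h2', pow_add]; ring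
    rw [hm] at e
    have hαk : α ^ (k : ℕ) = c := by
      field_simp at e
      rw [hc_def, eq_div_iff h2]
      linear_combination e
    have hk : k = k₀ := by
      apply hinj
      apply Units.ext
      rw [Units.val_pow_eq_pow_val, Units.val_pow_eq_pow_val, huc, hαk, hαk₀]
    have hs : s = v - (α ^ (k₀ : ℕ) - 1) / (α - 1) := by
      rw [← hk]; rw [h1]; ring
    rw [hs, hk]
end

section
/- Let α be a finite type with card α = q and let f : α → β be a non-constant function into an arbitrary type β. Then the number of unordered pairs {a, b} of distinct elements of α with f(a) ≠ f(b) is at least q − 1. (In the paper this shows that if f is a 2-chain on the surface S_g', whose dual graph is the complete graph on q = 4g+1 facets, and ∂f ≠ 0, then |∂f| ≥ k(q−k) ≥ 4g, i.e., every null-homologous loop in the 1-skeleton of S_g' contains at least 4g edges.) -/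
/-- If `α` has cardinality `q` and `f : α → β` is non-constant, then there are
at least `q − 1` unordered pairs `{a, b}` of distinct elements of `α` with
`f a ≠ f b`. (For a 2-chain `f` on the surface `S_g'`, whose dual graph is the
complete graph on `q = 4g+1` facets, this shows `∂f ≠ 0` implies
`|∂f| ≥ k(q−k) ≥ 4g`.) -/
theorem nonconstant_many_separating_pairs {α β : Type*} [Fintype α] [DecidableEq α]
    (q : ℕ) (hq : Fintype.card α = q) (f : α → β)
    (hf : ∃ a b : α, f a ≠ f b) :
    q - 1 ≤ Nat.card {s : Finset α // ∃ a b : α, a ≠ b ∧ s = {a, b} ∧ f a ≠ f b} := by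
  classical
  obtain ⟨a, b, hab⟩ := hf
  have hba : b ≠ a := fun h => hab (by rw [h])
  set P : Finset α → Prop := fun s => ∃ a b : α, a ≠ b ∧ s = {a, b} ∧ f a ≠ f b with hP
  let g : {x : α // x ≠ a} → {s : Finset α // P s} := fun x =>
    if h : f x.1 = f a then
      ⟨{b, x.1}, b, x.1, fun he => hab ((congrArg f he).trans h).symm, rfl, fun he => hab (he.trans h).symm⟩
    else
      ⟨{a, x.1}, a, x.1, fun he => h (congrArg f he).symm, rfl, fun he => h he.symm⟩
  have hginj : Function.Injective g := by
    rintro ⟨x, hx⟩ ⟨y, hy⟩ hxy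
    simp only [g] at hxy
    ext
    by_cases h1 : f x = f a <;> by_cases h2 : f y = f a <;>
      simp only [h1, h2, dif_pos, dif_neg, not_false_iff, Subtype.mk.injEq] at hxy
    · -- {b,x} = {b,y}
      have hxm : x ∈ ({b, y} : Finset α) := by rw [← hxy]; simp
      simp only [Finset.mem_insert, Finset.mem_singleton] at hxm
      rcases hxm with h | h
      · exact absurd ((congrArg f h).symm.trans h1).symm hab
      · exact h
    · -- {b,x} = {a,y}
      exfalso
      have hbm : b ∈ ({a, y} : Finset α) := by rw [← hxy]; simp
      simp only [Finset.mem_insert, Finset.mem_singleton] at hbm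
      rcases hbm with h | h
      · exact hba h
      · have hxm : x ∈ ({a, y} : Finset α) := by rw [← hxy]; simp
        simp only [Finset.mem_insert, Finset.mem_singleton] at hxm
        rcases hxm with h' | h'
        · exact hx h'
        · exact hab ((congrArg f h).trans ((congrArg f h').symm.trans h1)).symm
    · -- {a,x} = {b,y}
      exfalso
      have hbm : b ∈ ({a, x} : Finset α) := by rw [hxy]; simp
      simp only [Finset.mem_insert, Finset.mem_singleton] at hbm
      rcases hbm with h | h
      · exact hba h
      · have hym : y ∈ ({a, x} : Finset α) := by rw [hxy]; simp
        simp only [Finset.mem_insert, Finset.mem_singleton] at hym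
        rcases hym with h' | h'
        · exact hy h'
        · exact hab ((congrArg f h).trans ((congrArg f h').symm.trans h2)).symm
    · -- {a,x} = {a,y}
      have hxm : x ∈ ({a, y} : Finset α) := by rw [← hxy]; simp
      simp only [Finset.mem_insert, Finset.mem_singleton] at hxm
      rcases hxm with h | h
      · exact absurd h hx
      · exact h
  have hcard : Nat.card {x : α // x ≠ a} = q - 1 := by
    rw [Nat.card_eq_fintype_card]
    have : Fintype.card {x : α // x ≠ a} = Fintype.card α - 1 := by
      simp [Fintype.card_subtype_compl]
    rw [this, hq]
  calc q - 1 = Nat.card {x : α // x ≠ a} := hcard.symm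
    _ ≤ Nat.card {s : Finset α // P s} := Nat.card_le_card_of_injective g hginj
end
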